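/- Equilibrium of the position coupling implies the desired formation: let G be a connected simple graph on {1,…,N} with adjacency matrix a (a_ij = 1 if {i,j} is an edge, else 0), let β > 0, let q_1,…,q_N ∈ ℝ and p*_ij := q_i − q_j, and let p_1,…,p_N ∈ ℝ. If for every i ∈ {1,…,N} one has ∑_{j=1}^N a_ij·sig(p_i − p_j − p*_ij)^β = 0, then p_i − p_j = p*_ij for all i, j ∈ {1,…,N}. -/

import Mathlib

/-!
Write `e := p - q`; the hypothesis says that `∑ⱼ aᵢⱼ sig(eᵢ - eⱼ)^β = 0` for every `i`.
Multiplying by `eᵢ` and summing, the antisymmetry of `aᵢⱼ sig(eᵢ - eⱼ)^β` turns this into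
`∑ᵢ ∑ⱼ aᵢⱼ sig(eᵢ - eⱼ)^β (eᵢ - eⱼ) = 0`, a sum of nonnegative terms. Hence `eᵢ = eⱼ` along
every edge, so `e` is constant on the connected graph, which is the claim.
-/

/-- `sig(x)^β := sign(x) · |x|^β`. -/
noncomputable def sig (x β : ℝ) : ℝ := Real.sign x * |x| ^ β

lemma sig_neg (x β : ℝ) : sig (-x) β = -sig x β := by
  rw [sig, sig, Real.sign_neg, abs_neg, neg_mul]

lemma sig_mul_self_pos {x : ℝ} (β : ℝ) (hx : x ≠ 0) : 0 < sig x β * x := by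
  have hpow : 0 < |x| ^ β := Real.rpow_pos_of_pos (abs_pos.mpr hx) β
  rcases hx.lt_or_gt with hneg | hpos
  · rw [sig, Real.sign_of_neg hneg]
    nlinarith
  · rw [sig, Real.sign_of_pos hpos]
    nlinarith

lemma sig_mul_self_nonneg (x β : ℝ) : 0 ≤ sig x β * x := by
  rcases eq_or_ne x 0 with rfl | hx
  · simp
  · exact (sig_mul_self_pos β hx).le

theorem Finset.sum_sum_mul_sub_of_antisymm {ι R : Type*} [Fintype ι] [CommRing R]
    (F : ι → ι → R) (hF : ∀ i j, F j i = -F i j) (x : ι → R) :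
    ∑ i, ∑ j, F i j * (x i - x j) = 2 * ∑ i, x i * ∑ j, F i j := by
  have hswap : ∑ i, ∑ j, F i j * x j = -∑ i, ∑ j, F i j * x i := by
    rw [Finset.sum_comm, ← Finset.sum_neg_distrib]
    refine Finset.sum_congr rfl fun i _ => ?_
    rw [← Finset.sum_neg_distrib]
    exact Finset.sum_congr rfl fun j _ => by rw [hF]; ring
  simp only [mul_sub, Finset.sum_sub_distrib, hswap, Finset.mul_sum]
  simp only [← Finset.sum_neg_distrib, ← Finset.sum_sub_distrib]
  exact Finset.sum_congr rfl fun i _ => Finset.sum_congr rfl fun j _ => by ring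

theorem eq_of_sum_mul_sig_sub_eq_zero {ι : Type*} [Fintype ι] {w : ι → ι → ℝ}
    (hw_symm : ∀ i j, w i j = w j i) (hw_nonneg : ∀ i j, 0 ≤ w i j) {x : ι → ℝ} {β : ℝ}
    (h : ∀ i, ∑ j, w i j * sig (x i - x j) β = 0) {i j : ι} (hij : 0 < w i j) :
    x i = x j := by
  set F : ι → ι → ℝ := fun i j => w i j * sig (x i - x j) β
  have hF : ∀ i j, F j i = -F i j := fun i j => by
    simp only [F, hw_symm j i, ← mul_neg, ← sig_neg, neg_sub]
  have hterm_nonneg : ∀ i j, 0 ≤ F i j * (x i - x j) := fun i j => by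
    simpa only [F, mul_assoc] using mul_nonneg (hw_nonneg i j) (sig_mul_self_nonneg (x i - x j) β)
  have henergy : ∑ i, ∑ j, F i j * (x i - x j) = 0 := by
    rw [Finset.sum_sum_mul_sub_of_antisymm F hF x]
    simp [F, h]
  have hterm : F i j * (x i - x j) = 0 := by
    refine le_antisymm ?_ (hterm_nonneg i j)
    calc F i j * (x i - x j) ≤ ∑ j', F i j' * (x i - x j') :=
          Finset.single_le_sum (fun j' _ => hterm_nonneg i j') (Finset.mem_univ j)
      _ ≤ ∑ i', ∑ j', F i' j' * (x i' - x j') :=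
          Finset.single_le_sum (f := fun i' => ∑ j', F i' j' * (x i' - x j'))
            (fun i' _ => Finset.sum_nonneg fun j' _ => hterm_nonneg i' j') (Finset.mem_univ i)
      _ = 0 := henergy
  by_contra hne
  have hpos := mul_pos hij (sig_mul_self_pos β (sub_ne_zero.mpr hne))
  simp only [F, mul_assoc] at hterm
  exact hpos.ne' hterm

theorem SimpleGraph.Reachable.apply_eq_of_forall_adj {V α : Type*} {G : SimpleGraph V}
    {f : V → α} (hf : ∀ u v, G.Adj u v → f u = f v) {u v : V} (h : G.Reachable u v) :
    f u = f v := by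
  obtain ⟨w⟩ := h
  induction w with
  | nil => rfl
  | cons hadj _ ih => exact (hf _ _ hadj).trans ih

theorem equilibrium_implies_formation_general
    (N : ℕ) (G : SimpleGraph (Fin N)) [DecidableRel G.Adj] (hconn : G.Connected)
    (a : Fin N → Fin N → ℝ) (ha : ∀ i j, a i j = if G.Adj i j then 1 else 0)
    (β : ℝ)
    (q : Fin N → ℝ) (pstar : Fin N → Fin N → ℝ)
    (hps : ∀ i j, pstar i j = q i - q j)
    (p : Fin N → ℝ)
    (h : ∀ i, ∑ j, a i j * sig (p i - p j - pstar i j) β = 0) :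
    ∀ i j, p i - p j = pstar i j := by
  have ha_symm : ∀ i j, a i j = a j i := fun i j => by simp only [ha, G.adj_comm]
  have ha_nonneg : ∀ i j, 0 ≤ a i j := fun i j => by rw [ha]; split_ifs <;> norm_num
  have hequil : ∀ i, ∑ j, a i j * sig ((p - q) i - (p - q) j) β = 0 := fun i => by
    simpa only [hps, Pi.sub_apply, sub_sub_sub_comm] using h i
  have hconsensus : ∀ u v, G.Adj u v → (p - q) u = (p - q) v := fun u v huv =>
    eq_of_sum_mul_sig_sub_eq_zero ha_symm ha_nonneg hequil (by simp [ha, huv])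
  intro i j
  have hij := (hconn.preconnected i j).apply_eq_of_forall_adj hconsensus
  rw [hps]
  simp only [Pi.sub_apply] at hij
  linarith

/-- Equilibrium of the position coupling implies the desired formation: on a
connected graph, if `∑ⱼ aᵢⱼ·sig(pᵢ−pⱼ−p*ᵢⱼ)^β = 0` for every `i`, then
`pᵢ − pⱼ = p*ᵢⱼ` for all `i, j`. -/
theorem equilibrium_implies_formation
    (N : ℕ) (G : SimpleGraph (Fin N)) [DecidableRel G.Adj] (hconn : G.Connected)
    (a : Fin N → Fin N → ℝ) (ha : ∀ i j, a i j = if G.Adj i j then 1 else 0)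
    (β : ℝ) (hβ : 0 < β)
    (q : Fin N → ℝ) (pstar : Fin N → Fin N → ℝ)
    (hps : ∀ i j, pstar i j = q i - q j)
    (p : Fin N → ℝ)
    (h : ∀ i, ∑ j, a i j * sig (p i - p j - pstar i j) β = 0) :
    ∀ i j, p i - p j = pstar i j :=
  equilibrium_implies_formation_general N G hconn a ha β q pstar hps p h
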